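/- arXiv:2104.09488 — 5 statements merged into one kernel-verified Lean document; each statement's English description precedes it below -/
import Mathlib

section
/- Let G be a simple graph with inner hub A (i.e., A = V(S₁) ∩ V(S₂) for any two distinct maximal cliques S₁, S₂ of G). If G is connected and A is nonempty, then every vertex v ∈ A is adjacent to all other vertices of G. -/
/-- A maximal clique of `G`: a clique not properly contained in another clique. -/
def IsMaxClique {V : Type*} (G : SimpleGraph V) (s : Set V) : Prop :=
  G.IsClique s ∧ ∀ t : Set V, G.IsClique t → s ⊆ t → s = t

/-- `A` is an inner hub of `G` if `A` equals the intersection of the vertex sets of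
any two distinct maximal cliques of `G`. -/
def IsInnerHub {V : Type*} (G : SimpleGraph V) (A : Set V) : Prop :=
  ∀ s t : Set V, IsMaxClique G s → IsMaxClique G t → s ≠ t → s ∩ t = A

/-- Every vertex lies in some maximal clique. -/
lemma exists_maxClique_mem {V : Type*} (G : SimpleGraph V) (w : V) :
    ∃ s : Set V, IsMaxClique G s ∧ w ∈ s := by
  obtain ⟨m, hm, hmax⟩ := zorn_subset_nonempty {s : Set V | G.IsClique s ∧ w ∈ s}
    (fun c hcS hc hne => by
      obtain ⟨x, hx⟩ := hne
      refine ⟨⋃₀ c, ⟨?_, Set.mem_sUnion.2 ⟨x, hx, (hcS hx).2⟩⟩, fun s hs => Set.subset_sUnion_of_mem hs⟩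
      intro a ha b hb hab
      obtain ⟨sa, hsa, ha⟩ := ha
      obtain ⟨sb, hsb, hb⟩ := hb
      rcases hc.total hsa hsb with h | h
      · exact (hcS hsb).1 (h ha) hb hab
      · exact (hcS hsa).1 ha (h hb) hab)
    {w} ⟨by simp, rfl⟩
  refine ⟨m, ⟨hmax.1.1, fun t ht hmt => ?_⟩, hmax.1.2⟩
  exact Set.Subset.antisymm hmt (hmax.2 ⟨ht, hmt hmax.1.2⟩ hmt)

/-- If a connected graph has a nonempty inner hub `A`, then every vertex of `A`
is adjacent to all other vertices of the graph. -/
theorem innerHub_adj_all {V : Type*} [Fintype V] (G : SimpleGraph V) (A : Set V)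
    (hA : IsInnerHub G A) (hconn : G.Connected) (hne : A.Nonempty) :
    ∀ v ∈ A, ∀ w : V, w ≠ v → G.Adj v w := by
  intro v hv w hwv
  by_cases huniq : ∀ s t : Set V, IsMaxClique G s → IsMaxClique G t → s = t
  · -- unique maximal clique: all vertices in it, so adjacent
    obtain ⟨S, hS, hvS⟩ := exists_maxClique_mem G v
    obtain ⟨T, hT, hwT⟩ := exists_maxClique_mem G w
    have := huniq S T hS hT
    subst this
    exact hS.1 hvS hwT (Ne.symm hwv)
  · push_neg at huniq
    obtain ⟨S, T, hS, hT, hST⟩ := huniq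
    have hvST : v ∈ S ∩ T := (hA S T hS hT hST).symm ▸ hv
    obtain ⟨U, hU, hwU⟩ := exists_maxClique_mem G w
    have hvU : v ∈ U := by
      by_cases h : U = S
      · exact h ▸ hvST.1
      · exact ((hA U S hU hS h) ▸ hv : v ∈ U ∩ S).1
    exact hU.1 hvU hwU (Ne.symm hwv)
end

section
/- If a graph G is disconnected and has an inner hub, then the inner hub is empty and every connected component of G is a complete graph. -/
lemma exists_maxClique_superset {V : Type*} (G : SimpleGraph V) (s : Set V)
    (hs : G.IsClique s) : ∃ m, IsMaxClique G m ∧ s ⊆ m := by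
  have h : ∀ c ⊆ {t | G.IsClique t}, IsChain (· ⊆ ·) c → c.Nonempty →
      ∃ ub ∈ {t | G.IsClique t}, ∀ s ∈ c, s ⊆ ub := by
    intro c hc hchain hne
    refine ⟨⋃₀ c, ?_, fun t ht => Set.subset_sUnion_of_mem ht⟩
    intro x hx y hy hxy
    obtain ⟨tx, htx, hxtx⟩ := hx
    obtain ⟨ty, hty, hyty⟩ := hy
    rcases hchain.total htx hty with h | h
    · exact hc hty (h hxtx) hyty hxy
    · exact hc htx hxtx (h hyty) hxy
  obtain ⟨m, hsm, hm⟩ := zorn_subset_nonempty {t | G.IsClique t} h s hs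
  exact ⟨m, ⟨hm.prop, fun t ht hmt => hm.eq_of_subset ht hmt⟩, hsm⟩

/-- If a graph is disconnected and has an inner hub, then the inner hub is empty and
every connected component of the graph is a complete graph. -/
theorem disconnected_innerHub {V : Type*} [Fintype V] [Nonempty V] (G : SimpleGraph V)
    (A : Set V) (hA : IsInnerHub G A) (hdis : ¬ G.Connected) :
    A = ∅ ∧ ∀ u v : V, G.connectedComponentMk u = G.connectedComponentMk v →
      u ≠ v → G.Adj u v := by
  have hpre : ¬ G.Preconnected := fun h => hdis ⟨h⟩
  rw [SimpleGraph.Preconnected] at hpre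
  push_neg at hpre
  obtain ⟨u0, v0, hur⟩ := hpre
  obtain ⟨s, hsmax, hus⟩ := exists_maxClique_superset G {u0} (G.isClique_singleton u0)
  obtain ⟨t, htmax, hvt⟩ := exists_maxClique_superset G {v0} (G.isClique_singleton v0)
  have hu0s : u0 ∈ s := hus rfl
  have hv0t : v0 ∈ t := hvt rfl
  have reach_of_mem : ∀ (c : Set V), G.IsClique c → ∀ x ∈ c, ∀ y ∈ c, G.Reachable x y := by
    intro c hc x hx y hy
    by_cases hxy : x = y
    · exact hxy ▸ SimpleGraph.Reachable.refl x
    · exact (hc hx hy hxy).reachable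
  have hst : s ≠ t := by
    rintro rfl
    exact hur (reach_of_mem s hsmax.1 u0 hu0s v0 hv0t)
  have hA0 : A = ∅ := by
    rw [← hA s t hsmax htmax hst]
    ext z
    simp only [Set.mem_inter_iff, Set.mem_empty_iff_false, iff_false, not_and]
    intro hzs hzt
    exact hur ((reach_of_mem s hsmax.1 u0 hu0s z hzs).trans
      (reach_of_mem t htmax.1 z hzt v0 hv0t))
  refine ⟨hA0, ?_⟩
  have tri : ∀ a b c : V, G.Adj a b → G.Adj b c → a ≠ c → G.Adj a c := by
    intro a b c hab hbc hac
    have hclab : G.IsClique {a, b} := by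
      rw [SimpleGraph.isClique_pair]; exact fun _ => hab
    have hclbc : G.IsClique {b, c} := by
      rw [SimpleGraph.isClique_pair]; exact fun _ => hbc
    obtain ⟨p, hpmax, habp⟩ := exists_maxClique_superset G _ hclab
    obtain ⟨q, hqmax, hbcq⟩ := exists_maxClique_superset G _ hclbc
    by_cases hpq : p = q
    · subst hpq
      exact hpmax.1 (habp (by simp)) (hbcq (by simp)) hac
    · exfalso
      have : b ∈ p ∩ q := ⟨habp (by simp), hbcq (by simp)⟩
      rw [hA p q hpmax hqmax hpq, hA0] at this
      exact this
  intro u v hcomp hne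
  have hreach : G.Reachable u v := SimpleGraph.ConnectedComponent.eq.mp hcomp
  obtain ⟨w⟩ := hreach
  clear hcomp
  induction w with
  | nil => exact absurd rfl hne
  | @cons a b c h p ih =>
    by_cases hbc : b = c
    · exact hbc ▸ h
    · exact tri a b c h (ih hbc) hne
end

section
/- Let P_n be the path graph on n ≥ 4 vertices and let F_{1,n} = C₁ + P_n be the fan graph obtained by joining a single vertex v to every vertex of P_n. Then F_{1,n} has no inner hub. -/
/-- The relation generating the fan graph `F_{k,n}`: the `k` vertices on the left are
joined to every vertex of the path `P_n` on the right. -/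
def fanRel (k n : ℕ) : (Fin k ⊕ Fin n) → (Fin k ⊕ Fin n) → Prop
  | Sum.inl _, Sum.inr _ => True
  | Sum.inr i, Sum.inr j => (SimpleGraph.pathGraph n).Adj i j
  | _, _ => False

/-- The fan graph `F_{k,n}`, the join of the edgeless graph on `k` vertices
with the path graph `P_n`. -/
def fanGraph (k n : ℕ) : SimpleGraph (Fin k ⊕ Fin n) :=
  SimpleGraph.fromRel (fanRel k n)

lemma fan_adj {n : ℕ} (x y : Fin 1 ⊕ Fin n) :
    (fanGraph 1 n).Adj x y ↔ x ≠ y ∧ (fanRel 1 n x y ∨ fanRel 1 n y x) := Iff.rfl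

lemma maxclique {n : ℕ} (i j : Fin n) (hij : (i : ℕ) + 1 = j) :
    IsMaxClique (fanGraph 1 n) {Sum.inl 0, Sum.inr i, Sum.inr j} := by
  have hadj : (SimpleGraph.pathGraph n).Adj i j := by
    rw [SimpleGraph.pathGraph_adj]; left; exact hij
  have hne : i ≠ j := by intro h; subst h; omega
  constructor
  · intro x hx y hy hxy
    simp only [Set.mem_insert_iff, Set.mem_singleton_iff] at hx hy
    rcases hx with rfl | rfl | rfl <;> rcases hy with rfl | rfl | rfl <;>
      first
        | exact absurd rfl hxy
        | exact ⟨hxy, by simp [fanRel, hadj, hadj.symm]⟩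
  · intro t ht hst
    apply Set.Subset.antisymm hst
    intro x hx
    rcases x with a | m
    · left; exact congrArg Sum.inl (Subsingleton.elim a 0)
    · by_contra hxs
      simp only [Set.mem_insert_iff, Set.mem_singleton_iff] at hxs
      push_neg at hxs
      have hit : (Sum.inr i : Fin 1 ⊕ Fin n) ∈ t := hst (by simp)
      have hjt : (Sum.inr j : Fin 1 ⊕ Fin n) ∈ t := hst (by simp)
      have h1 := ht hx hit hxs.2.1
      have h2 := ht hx hjt hxs.2.2
      rw [fan_adj] at h1 h2
      have p1 : (SimpleGraph.pathGraph n).Adj m i := by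
        rcases h1.2 with h | h
        · exact h
        · exact (h : (SimpleGraph.pathGraph n).Adj i m).symm
      have p2 : (SimpleGraph.pathGraph n).Adj m j := by
        rcases h2.2 with h | h
        · exact h
        · exact (h : (SimpleGraph.pathGraph n).Adj j m).symm
      rw [SimpleGraph.pathGraph_adj] at p1 p2
      omega

/-- For `n ≥ 4` the fan graph `F_{1,n}` has no inner hub. -/
theorem fanGraph_one_no_innerHub (n : ℕ) (hn : 4 ≤ n) :
    ¬ ∃ A : Set (Fin 1 ⊕ Fin n), IsInnerHub (fanGraph 1 n) A := by
  rintro ⟨A, hA⟩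
  set v0 : Fin n := ⟨0, by omega⟩
  set v1 : Fin n := ⟨1, by omega⟩
  set v2 : Fin n := ⟨2, by omega⟩
  set v3 : Fin n := ⟨3, by omega⟩
  have m01 := maxclique v0 v1 rfl
  have m12 := maxclique v1 v2 rfl
  have m23 := maxclique v2 v3 rfl
  have ne01 : ({Sum.inl 0, Sum.inr v0, Sum.inr v1} : Set (Fin 1 ⊕ Fin n)) ≠ {Sum.inl 0, Sum.inr v1, Sum.inr v2} := by
    intro h
    have : (Sum.inr v0 : Fin 1 ⊕ Fin n) ∈ ({Sum.inl 0, Sum.inr v1, Sum.inr v2} : Set _) := h ▸ (by simp)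
    simp only [Set.mem_insert_iff, Set.mem_singleton_iff, Sum.inr.injEq, Fin.mk.injEq] at this
    rcases this with h|h|h <;> simp_all [v0, v1, v2, Fin.ext_iff]
  have ne12 : ({Sum.inl 0, Sum.inr v1, Sum.inr v2} : Set (Fin 1 ⊕ Fin n)) ≠ {Sum.inl 0, Sum.inr v2, Sum.inr v3} := by
    intro h
    have : (Sum.inr v1 : Fin 1 ⊕ Fin n) ∈ ({Sum.inl 0, Sum.inr v2, Sum.inr v3} : Set _) := h ▸ (by simp)
    rcases this with h|h|h <;> simp_all [v1, v2, v3, Fin.ext_iff]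
  have e1 := hA _ _ m01 m12 ne01
  have e2 := hA _ _ m12 m23 ne12
  have hin : (Sum.inr v1 : Fin 1 ⊕ Fin n) ∈ A := by
    rw [← e1]; constructor <;> simp
  rw [← e2] at hin
  rcases hin.2 with h|h|h <;> simp_all [v1, v2, v3, Fin.ext_iff]
end

section
/- Let G be a graph on vertices {v₁,…,v_m}, b(x₁,…,x_m) = Σ_{ {v_s,v_t} ∈ E(G)} x_s·x_t with x_i ∈ ℝⁿ, and (u₁,…,u_m) functions with Σᵢ uᵢ(xᵢ) ≥ b(x₁,…,x_m) everywhere. Let W be the set where equality holds. If (x¹₁,…,x¹_m), (x²₁,…,x²_m) ∈ W with x¹₁ = x²₁, then for every index t, (x²_t − x¹_t) · Σ_{s ∈ I(N(v_t))} (x¹_s − x²_s) ≤ 0, where I(N(v_t)) are the indices of neighbors of v_t in G. -/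
open scoped RealInnerProductSpace
open Finset

/-- The surplus function `b(x₁,…,x_m) = ∑_{{v_s,v_t} ∈ E(G)} x_s ⋅ x_t` associated to a
graph `G` on vertices `{1,…,m}`. -/
noncomputable def surplus {d m : ℕ} (G : SimpleGraph (Fin m)) [DecidableRel G.Adj]
    (x : Fin m → EuclideanSpace ℝ (Fin d)) : ℝ :=
  ∑ e ∈ G.edgeFinset,
    Sym2.lift ⟨fun s t => ⟪x s, x t⟫, fun s t => real_inner_comm (x t) (x s)⟩ e

lemma incidence_image {m : ℕ} (G : SimpleGraph (Fin m)) [DecidableRel G.Adj] (t : Fin m) :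
    {e ∈ G.edgeFinset | t ∈ e} = (G.neighborFinset t).image (fun s => s(t, s)) := by
  ext e
  induction e with
  | _ i j =>
    simp only [mem_filter, SimpleGraph.mem_edgeFinset, Sym2.mem_iff, mem_image,
      SimpleGraph.mem_neighborFinset, SimpleGraph.mem_edgeSet, Sym2.eq_iff]
    constructor
    · rintro ⟨hadj, rfl | rfl⟩
      · exact ⟨j, hadj, Or.inl ⟨rfl, rfl⟩⟩
      · exact ⟨i, hadj.symm, Or.inr ⟨rfl, rfl⟩⟩
    · rintro ⟨a, ha, ⟨rfl, rfl⟩ | ⟨rfl, rfl⟩⟩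
      · exact ⟨ha, Or.inl rfl⟩
      · exact ⟨ha.symm, Or.inr rfl⟩

lemma surplus_update {d m : ℕ} (G : SimpleGraph (Fin m)) [DecidableRel G.Adj]
    (x : Fin m → EuclideanSpace ℝ (Fin d)) (t : Fin m) (a : EuclideanSpace ℝ (Fin d)) :
    surplus G (Function.update x t a) =
      surplus G x + ⟪a - x t, ∑ s ∈ G.neighborFinset t, x s⟫ := by
  classical
  have key : ∀ y : Fin m → EuclideanSpace ℝ (Fin d),
      surplus G y = (∑ s ∈ G.neighborFinset t, ⟪y t, y s⟫) +
        ∑ e ∈ {e ∈ G.edgeFinset | ¬ t ∈ e},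
          Sym2.lift ⟨fun p q => ⟪y p, y q⟫, fun p q => real_inner_comm (y q) (y p)⟩ e := by
    intro y
    rw [surplus, ← Finset.sum_filter_add_sum_filter_not G.edgeFinset (t ∈ ·)]
    congr 1
    rw [incidence_image, Finset.sum_image]
    · simp
    · intro a _ b _ h
      simp only [Sym2.eq_iff] at h
      rcases h with ⟨-, h⟩ | ⟨h1, h2⟩
      · exact h
      · exact h2.trans h1
  have hne : ∀ s ∈ G.neighborFinset t, s ≠ t := by
    intro s hs
    exact (G.ne_of_adj (by simpa using hs)).symm
  rw [key, key x]
  have h1 : ∑ s ∈ G.neighborFinset t, ⟪Function.update x t a t, Function.update x t a s⟫ =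
      ∑ s ∈ G.neighborFinset t, ⟪a, x s⟫ := by
    apply Finset.sum_congr rfl
    intro s hs
    rw [Function.update_self, Function.update_of_ne (hne s hs)]
  have h2 : ∑ e ∈ {e ∈ G.edgeFinset | ¬ t ∈ e},
        Sym2.lift ⟨fun p q => ⟪Function.update x t a p, Function.update x t a q⟫,
          fun p q => real_inner_comm (Function.update x t a q) (Function.update x t a p)⟩ e =
      ∑ e ∈ {e ∈ G.edgeFinset | ¬ t ∈ e},
        Sym2.lift ⟨fun p q => ⟪x p, x q⟫, fun p q => real_inner_comm (x q) (x p)⟩ e := by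
    apply Finset.sum_congr rfl
    intro e he
    induction e with
    | _ i j =>
      simp only [mem_filter, Sym2.mem_iff, not_or] at he
      simp only [Sym2.lift_mk]
      rw [Function.update_of_ne (fun h => he.2.1 h.symm),
        Function.update_of_ne (fun h => he.2.2 h.symm)]
  rw [h1, h2, inner_sub_left, inner_sum, inner_sum]
  have : ∀ s ∈ G.neighborFinset t, ⟪a,x s⟫ = ⟪x t, x s⟫ + (⟪a, x s⟫ - ⟪x t, x s⟫) := by intros; ring
  rw [Finset.sum_congr rfl this, Finset.sum_add_distrib, Finset.sum_sub_distrib]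
  ring
/-- If `∑ᵢ uᵢ(xᵢ) ≥ b(x)` everywhere and equality holds at `x¹` and `x²` (points of the
equality set `W`) with `x¹₁ = x²₁`, then for every vertex `t`,
`⟪x²_t − x¹_t, ∑_{s ∈ N(v_t)} (x¹_s − x²_s)⟫ ≤ 0`. -/
theorem surplus_monotonicity {d m : ℕ} [NeZero m] (G : SimpleGraph (Fin m))
    [DecidableRel G.Adj]
    (u : Fin m → EuclideanSpace ℝ (Fin d) → ℝ)
    (hdual : ∀ x : Fin m → EuclideanSpace ℝ (Fin d), surplus G x ≤ ∑ i, u i (x i))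
    (x1 x2 : Fin m → EuclideanSpace ℝ (Fin d))
    (hx1 : ∑ i, u i (x1 i) = surplus G x1)
    (hx2 : ∑ i, u i (x2 i) = surplus G x2)
    (hfirst : x1 0 = x2 0) :
    ∀ t : Fin m, ⟪x2 t - x1 t, ∑ s ∈ G.neighborFinset t, (x1 s - x2 s)⟫ ≤ 0 := by
  classical
  intro t
  have usum : ∀ (x : Fin m → EuclideanSpace ℝ (Fin d)) (a : EuclideanSpace ℝ (Fin d)),
      ∑ i, u i (Function.update x t a i) = ∑ i, u i (x i) - u t (x t) + u t a := by
    intro x a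
    have hfun : (fun i => u i (Function.update x t a i)) =
        Function.update (fun i => u i (x i)) t (u t a) := by
      funext i
      by_cases h : i = t
      · subst h; simp
      · simp [Function.update_of_ne h]
    rw [hfun, Finset.sum_update_of_mem (Finset.mem_univ t)]
    rw [← Finset.sum_erase_add Finset.univ _ (Finset.mem_univ t), Finset.sdiff_singleton_eq_erase]
    ring
  have hy := hdual (Function.update x1 t (x2 t))
  have hz := hdual (Function.update x2 t (x1 t))
  rw [surplus_update, usum] at hy hz
  have e1 : ⟪x1 t - x2 t, ∑ s ∈ G.neighborFinset t, x2 s⟫ =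
      -⟪x2 t - x1 t, ∑ s ∈ G.neighborFinset t, x2 s⟫ := by
    rw [inner_sub_left, inner_sub_left]; ring
  have e2 : ⟪x2 t - x1 t, ∑ s ∈ G.neighborFinset t, (x1 s - x2 s)⟫ =
      ⟪x2 t - x1 t, ∑ s ∈ G.neighborFinset t, x1 s⟫ -
      ⟪x2 t - x1 t, ∑ s ∈ G.neighborFinset t, x2 s⟫ := by
    rw [Finset.sum_sub_distrib, inner_sub_right]
  rw [e1] at hz
  rw [e2]
  linarith
end

section
/- Let μ₀ and μ₁ be two probability measures on X₁ × ⋯ × X_m, each concentrated on the graph of a measurable map over the first coordinate (i.e., μ_k = (Id, T^k₂,…,T^k_m)_# μ₁-marginal for measurable maps T^k_i). If the measure μ_{1/2} = ½μ₀ + ½μ₁ is also concentrated on the graph of a measurable map over the first coordinate, then T⁰_i = T¹_i holds ν-almost everywhere for each i, where ν is the common first marginal, and hence μ₀ = μ₁. -/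
open MeasureTheory
open scoped ENNReal

/-- If two probability measures on a product, with the same first marginal, are each
concentrated on the graph of a measurable map over the first coordinate, and their average
is also concentrated on the graph of a measurable map over the first coordinate, then the
two maps agree almost everywhere with respect to the common first marginal and the two
measures coincide. -/
theorem uniqueness_of_monge_solutions {n m : ℕ} [NeZero m]
    (μ₀ μ₁ : Measure (Fin m → EuclideanSpace ℝ (Fin n)))
    [IsProbabilityMeasure μ₀] [IsProbabilityMeasure μ₁]
    (T0 T1 : Fin m → EuclideanSpace ℝ (Fin n) → EuclideanSpace ℝ (Fin n))
    (hT0meas : ∀ i, Measurable (T0 i)) (hT1meas : ∀ i, Measurable (T1 i))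
    (hT0id : T0 0 = id) (hT1id : T1 0 = id)
    (hmarg : μ₀.map (fun x => x 0) = μ₁.map (fun x => x 0))
    (hconc0 : μ₀ {x | ∀ i, x i = T0 i (x 0)} = 1)
    (hconc1 : μ₁ {x | ∀ i, x i = T1 i (x 0)} = 1)
    (hhalf : ∃ S : Fin m → EuclideanSpace ℝ (Fin n) → EuclideanSpace ℝ (Fin n),
      (∀ i, Measurable (S i)) ∧
      ((2 : ℝ≥0∞)⁻¹ • μ₀ + (2 : ℝ≥0∞)⁻¹ • μ₁) {x | ∀ i, x i = S i (x 0)} = 1) :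
    (∀ i, T0 i =ᵐ[μ₀.map (fun x => x 0)] T1 i) ∧ μ₀ = μ₁ := by
  classical
  obtain ⟨S, hSmeas, hSconc⟩ := hhalf
  have hproj : Measurable (fun x : Fin m → EuclideanSpace ℝ (Fin n) => x 0) :=
    measurable_pi_apply 0
  set ν := μ₀.map (fun x => x 0) with hν
  -- measurability of graph-type sets
  have hgraph : ∀ (T : Fin m → EuclideanSpace ℝ (Fin n) → EuclideanSpace ℝ (Fin n)),
      (∀ i, Measurable (T i)) →
      MeasurableSet {x : Fin m → EuclideanSpace ℝ (Fin n) | ∀ i, x i = T i (x 0)} := by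
    intro T hT
    rw [Set.setOf_forall]
    exact MeasurableSet.iInter fun i =>
      measurableSet_eq_fun (measurable_pi_apply i) ((hT i).comp hproj)
  have hAmeas := hgraph T0 hT0meas
  have hBmeas := hgraph T1 hT1meas
  have hCmeas := hgraph S hSmeas
  set A := {x : Fin m → EuclideanSpace ℝ (Fin n) | ∀ i, x i = T0 i (x 0)} with hA
  set B := {x : Fin m → EuclideanSpace ℝ (Fin n) | ∀ i, x i = T1 i (x 0)} with hB
  set C := {x : Fin m → EuclideanSpace ℝ (Fin n) | ∀ i, x i = S i (x 0)} with hC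
  -- from the half measure, both μ₀ and μ₁ give the set C full measure
  have hsum : (2 : ℝ≥0∞)⁻¹ * μ₀ C + (2 : ℝ≥0∞)⁻¹ * μ₁ C = 1 := by
    simpa [Measure.add_apply, Measure.smul_apply, smul_eq_mul] using hSconc
  have h0ne : μ₀ C ≠ ⊤ := measure_ne_top _ _
  have h1ne : μ₁ C ≠ ⊤ := measure_ne_top _ _
  have h0le : (μ₀ C).toReal ≤ 1 := by
    simpa using ENNReal.toReal_mono (by simp) (prob_le_one (μ := μ₀) (s := C))
  have h1le : (μ₁ C).toReal ≤ 1 := by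
    simpa using ENNReal.toReal_mono (by simp) (prob_le_one (μ := μ₁) (s := C))
  have hsum' : 2⁻¹ * (μ₀ C).toReal + 2⁻¹ * (μ₁ C).toReal = 1 := by
    have := congrArg ENNReal.toReal hsum
    rw [ENNReal.toReal_add (by finiteness) (by finiteness), ENNReal.toReal_mul,
      ENNReal.toReal_mul] at this
    simpa using this
  have hμ₀C : μ₀ C = 1 := (ENNReal.toReal_eq_one_iff _).mp (by linarith)
  have hμ₁C : μ₁ C = 1 := (ENNReal.toReal_eq_one_iff _).mp (by linarith)
  -- almost-everywhere statements
  have haeA : ∀ᵐ x ∂μ₀, x ∈ A := (mem_ae_iff_prob_eq_one hAmeas).mpr hconc0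
  have haeB : ∀ᵐ x ∂μ₁, x ∈ B := (mem_ae_iff_prob_eq_one hBmeas).mpr hconc1
  have haeC0 : ∀ᵐ x ∂μ₀, x ∈ C := (mem_ae_iff_prob_eq_one hCmeas).mpr hμ₀C
  have haeC1 : ∀ᵐ x ∂μ₁, x ∈ C := (mem_ae_iff_prob_eq_one hCmeas).mpr hμ₁C
  -- T0 agrees with S a.e. on ν, similarly for T1
  have hD0meas : MeasurableSet {y : EuclideanSpace ℝ (Fin n) | ∀ i, T0 i y = S i y} := by
    rw [Set.setOf_forall]
    exact MeasurableSet.iInter fun i => measurableSet_eq_fun (hT0meas i) (hSmeas i)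
  have hD1meas : MeasurableSet {y : EuclideanSpace ℝ (Fin n) | ∀ i, T1 i y = S i y} := by
    rw [Set.setOf_forall]
    exact MeasurableSet.iInter fun i => measurableSet_eq_fun (hT1meas i) (hSmeas i)
  have haeT0S : ∀ᵐ y ∂ν, ∀ i, T0 i y = S i y := by
    rw [hν, ae_map_iff hproj.aemeasurable hD0meas]
    filter_upwards [haeA, haeC0] with x hxA hxC i
    rw [← hxA i, ← hxC i]
  have haeT1S : ∀ᵐ y ∂ν, ∀ i, T1 i y = S i y := by
    rw [hmarg, ae_map_iff hproj.aemeasurable hD1meas]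
    filter_upwards [haeB, haeC1] with x hxB hxC i
    rw [← hxB i, ← hxC i]
  have haeT0T1 : ∀ᵐ y ∂ν, ∀ i, T0 i y = T1 i y := by
    filter_upwards [haeT0S, haeT1S] with y h0 h1 i
    rw [h0 i, h1 i]
  refine ⟨fun i => ?_, ?_⟩
  · filter_upwards [haeT0T1] with y hy using hy i
  -- μ₀ = μ₁
  · have hG0 : Measurable (fun y i => T0 i y :
        EuclideanSpace ℝ (Fin n) → Fin m → EuclideanSpace ℝ (Fin n)) :=
      measurable_pi_lambda _ hT0meas
    have hG1 : Measurable (fun y i => T1 i y :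
        EuclideanSpace ℝ (Fin n) → Fin m → EuclideanSpace ℝ (Fin n)) :=
      measurable_pi_lambda _ hT1meas
    have hmap0 : μ₀ = ν.map (fun y i => T0 i y) := by
      rw [hν, Measure.map_map hG0 hproj]
      have heq : (fun y i => T0 i y) ∘ (fun x : Fin m → EuclideanSpace ℝ (Fin n) => x 0)
          =ᵐ[μ₀] id := by
        filter_upwards [haeA] with x hx
        funext i
        exact (hx i).symm
      rw [Measure.map_congr heq, Measure.map_id]
    have hmap1 : μ₁ = ν.map (fun y i => T1 i y) := by
      rw [hmarg, Measure.map_map hG1 hproj]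
      have heq : (fun y i => T1 i y) ∘ (fun x : Fin m → EuclideanSpace ℝ (Fin n) => x 0)
          =ᵐ[μ₁] id := by
        filter_upwards [haeB] with x hx
        funext i
        exact (hx i).symm
      rw [Measure.map_congr heq, Measure.map_id]
    rw [hmap0, hmap1]
    apply Measure.map_congr
    filter_upwards [haeT0T1] with y hy
    funext i
    exact hy i
end
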